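/- Let p_1, …, p_n ∈ ℝ² with n ≥ 1 and let α, β ∈ ℝ. Call a pair of indices (i, j) with i ≤ j an α-backward pair if x_{p_j} + α y_{p_j} ≤ x_{p_i} + α y_{p_i}. Then max{ δ_{p_i p_j}(α, β) : (i, j) an α-backward pair } = max{ δ'_{p_i p_j}(α, β) : i ≤ j }. (Both maxima range over nonempty sets since every pair (i, i) is an α-backward pair.) -/

import Mathlib

open Metric Set

noncomputable section

/-- Points of the Euclidean plane ℝ². -/
abbrev Pt : Type := EuclideanSpace ℝ (Fin 2)

/-- The point (x, y) ∈ ℝ². -/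
def pt (x y : ℝ) : Pt := (WithLp.equiv 2 (Fin 2 → ℝ)).symm ![x, y]

/-- The leftward horizontal halfline ←p = {(x, y_p) : x ≤ x_p}. -/
def leftRay (p : Pt) : Set Pt := {z : Pt | z 1 = p 1 ∧ z 0 ≤ p 0}

/-- The rightward horizontal halfline →p = {(x, y_p) : x ≥ x_p}. -/
def rightRay (p : Pt) : Set Pt := {z : Pt | z 1 = p 1 ∧ p 0 ≤ z 0}

/-- h_{←p}(q): Euclidean distance from q to the leftward halfline at p. -/
def hL (p q : Pt) : ℝ := infDist q (leftRay p)

/-- h_{→p}(q): Euclidean distance from q to the rightward halfline at p. -/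
def hR (p q : Pt) : ℝ := infDist q (rightRay p)

/-- h_{←S}(q) = max_{p ∈ S} h_{←p}(q). -/
def hLS (S : Finset Pt) (hS : S.Nonempty) (q : Pt) : ℝ := S.sup' hS fun p => hL p q

/-- h_{→S}(q) = max_{p ∈ S} h_{→p}(q). -/
def hRS (S : Finset Pt) (hS : S.Nonempty) (q : Pt) : ℝ := S.sup' hS fun p => hR p q

/-- δ_{pq}(y) = inf_x max{‖(x,y) − p‖, ‖(x,y) − q‖}. -/
def delta (p q : Pt) (y : ℝ) : ℝ := ⨅ x : ℝ, max ‖pt x y - p‖ ‖pt x y - q‖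

/-- δ'_{pq}(y) = inf_x max{h_{←q}((x,y)), h_{→p}((x,y))}. -/
def delta' (p q : Pt) (y : ℝ) : ℝ := ⨅ x : ℝ, max (hL q (pt x y)) (hR p (pt x y))


/-- The leftward halfline of slope α at p: { p − t·(1, α) : t ≥ 0 }. -/
def leftRayA (α : ℝ) (p : Pt) : Set Pt := {z : Pt | ∃ t : ℝ, 0 ≤ t ∧ z = p - t • pt 1 α}

/-- The rightward halfline of slope α at p: { p + t·(1, α) : t ≥ 0 }. -/
def rightRayA (α : ℝ) (p : Pt) : Set Pt := {z : Pt | ∃ t : ℝ, 0 ≤ t ∧ z = p + t • pt 1 α}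

/-- h_{←^α p}(q): distance from q to the leftward halfline of slope α at p. -/
def hLA (α : ℝ) (p q : Pt) : ℝ := infDist q (leftRayA α p)

/-- h_{→^α p}(q): distance from q to the rightward halfline of slope α at p. -/
def hRA (α : ℝ) (p q : Pt) : ℝ := infDist q (rightRayA α p)

/-- h_{←^α T}(q) = max_{p ∈ T} h_{←^α p}(q). -/
def hLAS (α : ℝ) (T : Finset Pt) (hT : T.Nonempty) (q : Pt) : ℝ :=
  T.sup' hT fun p => hLA α p q

/-- h_{→^α T}(q) = max_{p ∈ T} h_{→^α p}(q). -/
def hRAS (α : ℝ) (T : Finset Pt) (hT : T.Nonempty) (q : Pt) : ℝ :=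
  T.sup' hT fun p => hRA α p q

/-- δ_{pq}(α, β) = inf_x max{‖(x, αx+β) − p‖, ‖(x, αx+β) − q‖}. -/
def deltaA (p q : Pt) (α β : ℝ) : ℝ :=
  ⨅ x : ℝ, max ‖pt x (α * x + β) - p‖ ‖pt x (α * x + β) - q‖

/-- δ'_{pq}(α, β) = inf_x max{h_{←^α q}((x, αx+β)), h_{→^α p}((x, αx+β))}. -/
def deltaA' (p q : Pt) (α β : ℝ) : ℝ :=
  ⨅ x : ℝ, max (hLA α q (pt x (α * x + β))) (hRA α p (pt x (α * x + β)))

lemma pt_apply0 (x y : ℝ) : pt x y 0 = x := rfl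
lemma pt_apply1 (x y : ℝ) : pt x y 1 = y := rfl

lemma dist_pt (z w : Pt) : dist z w = Real.sqrt ((z 0 - w 0)^2 + (z 1 - w 1)^2) := by
  rw [EuclideanSpace.dist_eq]
  simp [Fin.sum_univ_two, Real.dist_eq, sq_abs]

lemma le_infDist' {s : Set Pt} (hs : s.Nonempty) {z : Pt} {b : ℝ}
    (h : ∀ w ∈ s, b ≤ dist z w) : b ≤ infDist z s := by
  rw [infDist_eq_iInf]
  haveI : Nonempty s := hs.to_subtype
  exact le_ciInf fun w => h w w.2

lemma mem_leftRayA_self (α : ℝ) (q : Pt) : q ∈ leftRayA α q := ⟨0, le_refl 0, by simp⟩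
lemma mem_rightRayA_self (α : ℝ) (q : Pt) : q ∈ rightRayA α q := ⟨0, le_refl 0, by simp⟩

lemma hLA_le_dist (α : ℝ) (q z : Pt) : hLA α q z ≤ dist z q :=
  infDist_le_dist_of_mem (mem_leftRayA_self α q)
lemma hRA_le_dist (α : ℝ) (p z : Pt) : hRA α p z ≤ dist z p :=
  infDist_le_dist_of_mem (mem_rightRayA_self α p)

lemma hLA_nonneg (α : ℝ) (q z : Pt) : 0 ≤ hLA α q z := infDist_nonneg
lemma hRA_nonneg (α : ℝ) (p z : Pt) : 0 ≤ hRA α p z := infDist_nonneg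

-- H2 : if z is to the right of q (in u-order), distance to the left ray is dist to q
lemma dist_le_hLA (α : ℝ) (q z : Pt) (h : q 0 + α * q 1 ≤ z 0 + α * z 1) :
    dist z q ≤ hLA α q z := by
  apply le_infDist' ⟨q, mem_leftRayA_self α q⟩
  rintro w ⟨t, ht, rfl⟩
  have h0 : (q - t • pt 1 α) 0 = q 0 - t := by simp [pt]
  have h1 : (q - t • pt 1 α) 1 = q 1 - t * α := by simp [pt]
  rw [dist_pt, dist_pt, h0, h1]
  apply Real.sqrt_le_sqrt
  nlinarith [sq_nonneg t, sq_nonneg α]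

lemma dist_le_hRA (α : ℝ) (p z : Pt) (h : z 0 + α * z 1 ≤ p 0 + α * p 1) :
    dist z p ≤ hRA α p z := by
  apply le_infDist' ⟨p, mem_rightRayA_self α p⟩
  rintro w ⟨t, ht, rfl⟩
  have h0 : (p + t • pt 1 α) 0 = p 0 + t := by simp [pt]
  have h1 : (p + t • pt 1 α) 1 = p 1 + t * α := by simp [pt]
  rw [dist_pt, dist_pt, h0, h1]
  apply Real.sqrt_le_sqrt
  nlinarith [sq_nonneg t, sq_nonneg α]

-- H3 : general lower bound by perpendicular distance
lemma perp_le_hLA (α : ℝ) (q z : Pt) :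
    Real.sqrt ((α * (z 0 - q 0) - (z 1 - q 1))^2 / (1 + α^2)) ≤ hLA α q z := by
  apply le_infDist' ⟨q, mem_leftRayA_self α q⟩
  rintro w ⟨t, ht, rfl⟩
  have h0 : (q - t • pt 1 α) 0 = q 0 - t := by simp [pt]
  have h1 : (q - t • pt 1 α) 1 = q 1 - t * α := by simp [pt]
  rw [dist_pt, h0, h1]
  apply Real.sqrt_le_sqrt
  rw [div_le_iff₀ (by positivity)]
  nlinarith [sq_nonneg ((z 0 - q 0) + α * (z 1 - q 1) + t * (1 + α^2))]

lemma perp_le_hRA (α : ℝ) (p z : Pt) :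
    Real.sqrt ((α * (z 0 - p 0) - (z 1 - p 1))^2 / (1 + α^2)) ≤ hRA α p z := by
  apply le_infDist' ⟨p, mem_rightRayA_self α p⟩
  rintro w ⟨t, ht, rfl⟩
  have h0 : (p + t • pt 1 α) 0 = p 0 + t := by simp [pt]
  have h1 : (p + t • pt 1 α) 1 = p 1 + t * α := by simp [pt]
  rw [dist_pt, h0, h1]
  apply Real.sqrt_le_sqrt
  rw [div_le_iff₀ (by positivity)]
  nlinarith [sq_nonneg ((z 0 - p 0) + α * (z 1 - p 1) - t * (1 + α^2))]

-- H4 : upper bound by perpendicular distance when on correct side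
lemma hLA_le_perp (α : ℝ) (q z : Pt) (h : z 0 + α * z 1 ≤ q 0 + α * q 1) :
    hLA α q z ≤ Real.sqrt ((α * (z 0 - q 0) - (z 1 - q 1))^2 / (1 + α^2)) := by
  set t : ℝ := (q 0 + α * q 1 - (z 0 + α * z 1)) / (1 + α^2) with htdef
  have hpos : (0:ℝ) < 1 + α^2 := by positivity
  have ht : 0 ≤ t := div_nonneg (by linarith) (by positivity)
  have hmem : q - t • pt 1 α ∈ leftRayA α q := ⟨t, ht, rfl⟩
  refine le_trans (infDist_le_dist_of_mem hmem) ?_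
  have h0 : (q - t • pt 1 α) 0 = q 0 - t := by simp [pt]
  have h1 : (q - t • pt 1 α) 1 = q 1 - t * α := by simp [pt]
  rw [dist_pt, h0, h1]
  apply le_of_eq
  congr 1
  have htv : t * (1 + α^2) = q 0 + α * q 1 - (z 0 + α * z 1) := by
    rw [htdef, div_mul_cancel₀ _ hpos.ne']
  field_simp
  nlinarith [htv]

lemma hRA_le_perp (α : ℝ) (p z : Pt) (h : p 0 + α * p 1 ≤ z 0 + α * z 1) :
    hRA α p z ≤ Real.sqrt ((α * (z 0 - p 0) - (z 1 - p 1))^2 / (1 + α^2)) := by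
  set t : ℝ := ((z 0 + α * z 1) - (p 0 + α * p 1)) / (1 + α^2) with htdef
  have hpos : (0:ℝ) < 1 + α^2 := by positivity
  have ht : 0 ≤ t := div_nonneg (by linarith) (by positivity)
  have hmem : p + t • pt 1 α ∈ rightRayA α p := ⟨t, ht, rfl⟩
  refine le_trans (infDist_le_dist_of_mem hmem) ?_
  have h0 : (p + t • pt 1 α) 0 = p 0 + t := by simp [pt]
  have h1 : (p + t • pt 1 α) 1 = p 1 + t * α := by simp [pt]
  rw [dist_pt, h0, h1]
  apply le_of_eq
  congr 1
  have htv : t * (1 + α^2) = (z 0 + α * z 1) - (p 0 + α * p 1) := by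
    rw [htdef, div_mul_cancel₀ _ hpos.ne']
  field_simp
  nlinarith [htv]

lemma ux_eq (α β x : ℝ) :
    (pt x (α*x+β)) 0 + α * (pt x (α*x+β)) 1 = (1+α^2)*x + α*β := by
  rw [pt_apply0, pt_apply1]; ring

lemma dist_zx (α β x : ℝ) (q : Pt) :
    dist (pt x (α*x+β)) q
      = Real.sqrt ((((1+α^2)*x + α*β - (q 0 + α*q 1))^2 + (q 1 - α*q 0 - β)^2)/(1+α^2)) := by
  rw [dist_pt, pt_apply0, pt_apply1]
  congr 1
  have h : (0:ℝ) < 1 + α^2 := by positivity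
  field_simp
  ring

lemma perp_arg_eq (α β x : ℝ) (q : Pt) :
    (α * ((pt x (α*x+β)) 0 - q 0) - ((pt x (α*x+β)) 1 - q 1))^2 = (q 1 - α*q 0 - β)^2 := by
  rw [pt_apply0, pt_apply1]; ring

lemma xstar_eq (α β c : ℝ) : (1+α^2) * ((c - α*β)/(1+α^2)) + α*β = c := by
  have h : (0:ℝ) < 1 + α^2 := by positivity
  field_simp
  ring

lemma deltaA_dist (p q : Pt) (α β : ℝ) :
    deltaA p q α β
      = ⨅ x : ℝ, max (dist (pt x (α*x+β)) p) (dist (pt x (α*x+β)) q) := by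
  simp [deltaA, dist_eq_norm]

lemma bddBelow_g (p q : Pt) (α β : ℝ) :
    BddBelow (Set.range fun x : ℝ => max (dist (pt x (α*x+β)) p) (dist (pt x (α*x+β)) q)) := by
  refine ⟨0, ?_⟩; rintro _ ⟨x, rfl⟩
  exact le_trans dist_nonneg (le_max_left _ _)

lemma bddBelow_f (p q : Pt) (α β : ℝ) :
    BddBelow (Set.range fun x : ℝ => max (hLA α q (pt x (α*x+β))) (hRA α p (pt x (α*x+β)))) := by
  refine ⟨0, ?_⟩; rintro _ ⟨x, rfl⟩
  exact le_trans (hLA_nonneg _ _ _) (le_max_left _ _)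

/-- Lemma A: for backward pairs, δ = δ'. -/
lemma deltaA_eq_deltaA' (α β : ℝ) (p q : Pt) (h : q 0 + α * q 1 ≤ p 0 + α * p 1) :
    deltaA p q α β = deltaA' p q α β := by
  have hpos : (0:ℝ) < 1 + α^2 := by positivity
  rw [deltaA_dist]
  set uq := q 0 + α * q 1 with huq
  set up := p 0 + α * p 1 with hup
  apply le_antisymm
  · -- δ ≤ δ'
    rw [deltaA']
    apply le_ciInf
    intro x
    set z := pt x (α*x+β) with hz
    have huz : z 0 + α * z 1 = (1+α^2)*x + α*β := ux_eq α β x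
    rcases le_or_gt ((1+α^2)*x + α*β) up with hxp | hxp
    · rcases le_or_gt uq ((1+α^2)*x + α*β) with hxq | hxq
      · -- middle case
        refine le_trans (ciInf_le (bddBelow_g p q α β) x) ?_
        apply max_le
        · exact le_trans (dist_le_hRA α p z (by rw [huz]; exact hxp)) (le_max_right _ _)
        · exact le_trans (dist_le_hLA α q z (by rw [huz]; exact hxq)) (le_max_left _ _)
      · -- z left of q : use x' with u = uq
        set x' := (uq - α*β)/(1+α^2) with hx'
        have hux' : (1+α^2)*x' + α*β = uq := xstar_eq α β uq
        refine le_trans (ciInf_le (bddBelow_g p q α β) x') ?_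
        apply max_le
        · -- dist z' p ≤ hRA p z
          refine le_trans ?_ (le_max_right _ _)
          refine le_trans ?_ (dist_le_hRA α p z (by rw [huz]; linarith))
          rw [dist_zx, dist_zx, hux']
          apply Real.sqrt_le_sqrt
          rw [div_le_div_iff_of_pos_right hpos]
          nlinarith [h, hxq, hup, huq]
        · -- dist z' q ≤ hLA q z
          refine le_trans ?_ (le_max_left _ _)
          refine le_trans ?_ (perp_le_hLA α q z)
          rw [dist_zx, hux', perp_arg_eq α β x q]
          apply Real.sqrt_le_sqrt
          rw [div_le_div_iff_of_pos_right hpos]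
          nlinarith [huq]
    · -- z right of p : use x' with u = up
      set x' := (up - α*β)/(1+α^2) with hx'
      have hux' : (1+α^2)*x' + α*β = up := xstar_eq α β up
      refine le_trans (ciInf_le (bddBelow_g p q α β) x') ?_
      apply max_le
      · -- dist z' p ≤ hRA p z
        refine le_trans ?_ (le_max_right _ _)
        refine le_trans ?_ (perp_le_hRA α p z)
        rw [dist_zx, hux', perp_arg_eq α β x p]
        apply Real.sqrt_le_sqrt
        rw [div_le_div_iff_of_pos_right hpos]
        nlinarith [hup]
      · -- dist z' q ≤ dist z q ≤ hLA q z
        refine le_trans ?_ (le_max_left _ _)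
        refine le_trans ?_ (dist_le_hLA α q z (by rw [huz]; linarith))
        rw [dist_zx, dist_zx, hux']
        apply Real.sqrt_le_sqrt
        rw [div_le_div_iff_of_pos_right hpos]
        nlinarith [h, hxp, hup, huq]
  · -- δ' ≤ δ
    rw [deltaA']
    apply ciInf_mono (bddBelow_f p q α β)
    intro x
    apply max_le
    · exact le_trans (hLA_le_dist α q _) (le_max_right _ _)
    · exact le_trans (hRA_le_dist α p _) (le_max_left _ _)

/-- Lemma B: for forward pairs, δ' ≤ max of the самодистанции. -/
lemma deltaA'_le_max (α β : ℝ) (p q : Pt) (h : p 0 + α * p 1 ≤ q 0 + α * q 1) :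
    deltaA' p q α β ≤ max (deltaA p p α β) (deltaA q q α β) := by
  have hpos : (0:ℝ) < 1 + α^2 := by positivity
  set up := p 0 + α * p 1 with hup
  set uq := q 0 + α * q 1 with huq
  set x' := (up - α*β)/(1+α^2) with hx'
  have hux' : (1+α^2)*x' + α*β = up := xstar_eq α β up
  set z' := pt x' (α*x'+β) with hz'
  have huz' : z' 0 + α * z' 1 = (1+α^2)*x' + α*β := ux_eq α β x'
  refine le_trans (ciInf_le (bddBelow_f p q α β) x') ?_
  apply max_le
  · -- hLA q z' ≤ deltaA q q
    refine le_trans ?_ (le_max_right _ _)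
    refine le_trans (hLA_le_perp α q z' (by rw [huz', hux']; exact h)) ?_
    rw [deltaA_dist]
    apply le_ciInf
    intro x
    rw [max_self, dist_zx, perp_arg_eq α β x' q]
    apply Real.sqrt_le_sqrt
    rw [div_le_div_iff_of_pos_right hpos]
    nlinarith [sq_nonneg ((1+α^2)*x + α*β - (q 0 + α * q 1))]
  · -- hRA p z' ≤ deltaA p p
    refine le_trans ?_ (le_max_left _ _)
    refine le_trans (hRA_le_dist α p z') ?_
    rw [deltaA_dist]
    apply le_ciInf
    intro x
    rw [max_self, dist_zx, dist_zx, hux']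
    apply Real.sqrt_le_sqrt
    rw [div_le_div_iff_of_pos_right hpos]
    nlinarith [sq_nonneg ((1+α^2)*x + α*β - (p 0 + α * p 1)), hup]

theorem stmt_14 (n : ℕ) (hn : 1 ≤ n) (p : Fin n → Pt) (α β : ℝ) :
    (Finset.univ.filter
        (fun ij : Fin n × Fin n => ij.1 ≤ ij.2 ∧
          (p ij.2) 0 + α * (p ij.2) 1 ≤ (p ij.1) 0 + α * (p ij.1) 1)).sup'
      ⟨(⟨0, hn⟩, ⟨0, hn⟩), by simp⟩
      (fun ij => deltaA (p ij.1) (p ij.2) α β)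
    =
    (Finset.univ.filter (fun ij : Fin n × Fin n => ij.1 ≤ ij.2)).sup'
      ⟨(⟨0, hn⟩, ⟨0, hn⟩), by simp⟩
      (fun ij => deltaA' (p ij.1) (p ij.2) α β) := by
  apply le_antisymm
  · apply Finset.sup'_le
    rintro ij hij
    rw [Finset.mem_filter] at hij
    obtain ⟨-, hle, hback⟩ := hij
    rw [deltaA_eq_deltaA' α β _ _ hback]
    have hmem : ij ∈ Finset.univ.filter (fun ij : Fin n × Fin n => ij.1 ≤ ij.2) := by
      simp [Finset.mem_filter, hle]
    exact Finset.le_sup' (fun ij : Fin n × Fin n => deltaA' (p ij.1) (p ij.2) α β) hmem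
  · apply Finset.sup'_le
    rintro ij hij
    rw [Finset.mem_filter] at hij
    obtain ⟨-, hle⟩ := hij
    by_cases hback : (p ij.2) 0 + α * (p ij.2) 1 ≤ (p ij.1) 0 + α * (p ij.1) 1
    · rw [← deltaA_eq_deltaA' α β _ _ hback]
      have hmem : ij ∈ Finset.univ.filter
          (fun ij : Fin n × Fin n => ij.1 ≤ ij.2 ∧
            (p ij.2) 0 + α * (p ij.2) 1 ≤ (p ij.1) 0 + α * (p ij.1) 1) := by
        simp [Finset.mem_filter, hle, hback]
      exact Finset.le_sup' (fun ij : Fin n × Fin n => deltaA (p ij.1) (p ij.2) α β) hmem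
    · push_neg at hback
      refine le_trans (deltaA'_le_max α β _ _ hback.le) (max_le ?_ ?_)
      · have hmem : (ij.1, ij.1) ∈ Finset.univ.filter
            (fun ij : Fin n × Fin n => ij.1 ≤ ij.2 ∧
              (p ij.2) 0 + α * (p ij.2) 1 ≤ (p ij.1) 0 + α * (p ij.1) 1) := by
          simp [Finset.mem_filter]
        exact Finset.le_sup' (fun ij : Fin n × Fin n => deltaA (p ij.1) (p ij.2) α β) hmem
      · have hmem : (ij.2, ij.2) ∈ Finset.univ.filter
            (fun ij : Fin n × Fin n => ij.1 ≤ ij.2 ∧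
              (p ij.2) 0 + α * (p ij.2) 1 ≤ (p ij.1) 0 + α * (p ij.1) 1) := by
          simp [Finset.mem_filter]
        exact Finset.le_sup' (fun ij : Fin n × Fin n => deltaA (p ij.1) (p ij.2) α β) hmem
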